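/- arXiv:1908.03948 — 2 statements merged into one kernel-verified Lean document; each statement's English description precedes it below -/
import Mathlib

section
/- Let (M,d) be a metric space with a finite point set S, and let OPT be the optimal k-center cost of S. If Y ⊆ S is r-separated (pairwise distances ≥ r) with |Y| > k, and C ⊆ S with |C| ≤ k satisfies max_{x∈S} min_{c∈C} d(x,c) ≤ α·r·α/(α−1) for the next scale α·r, then the cost of C is at most 2·(α/(α−1))·α · OPT. -/
/-!
Two of the more than `k` points of an `r`-separated set `Y ⊆ S` share a nearest center in any
`k`-center solution of radius `opt`, so the triangle inequality gives `r ≤ 2 * opt`. Substituting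
this into the cost bound `α * r * (α / (α - 1))` of `C` yields the ratio `2 * (α / (α - 1)) * α`.
-/

theorem Set.Pairwise.le_two_mul_of_ncard_lt {X : Type*} [PseudoMetricSpace X] {Y C : Set X}
    {r ρ : ℝ} (hsep : Y.Pairwise fun y y' => r ≤ dist y y') (hC : C.Finite)
    (hcard : C.ncard < Y.ncard) (hcov : ∀ y ∈ Y, ∃ c ∈ C, dist y c ≤ ρ) : r ≤ 2 * ρ := by
  have hcov' : ∀ y, ∃ c, y ∈ Y → c ∈ C ∧ dist y c ≤ ρ := fun y => by
    by_cases hy : y ∈ Y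
    · obtain ⟨c, hc, hyc⟩ := hcov y hy
      exact ⟨c, fun _ => ⟨hc, hyc⟩⟩
    · exact ⟨y, fun h => absurd h hy⟩
  choose center hcenter using hcov'
  obtain ⟨y, hy, y', hy', hne, hsame⟩ :=
    exists_ne_map_eq_of_ncard_lt_of_maps_to hcard (fun y hy => (hcenter y hy).1) hC
  calc r ≤ dist y y' := hsep hy hy' hne
    _ ≤ dist y (center y) + dist y' (center y') := by
        rw [hsame]; exact dist_triangle_right _ _ _
    _ ≤ 2 * ρ := by linarith [(hcenter y hy).2, (hcenter y' hy').2]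

theorem stmt5_general {M : Type*} [MetricSpace M] (S : Set M)
    (k : ℕ) (α r : ℝ) (hα : 1 < α)
    (Y : Set M) (hYS : Y ⊆ S) (hYk : k < Y.ncard)
    (hsep : ∀ y ∈ Y, ∀ y' ∈ Y, y ≠ y' → r ≤ dist y y')
    (C : Set M)
    (hcost : ∀ x ∈ S, ∃ c ∈ C, dist x c ≤ α * r * (α / (α - 1))) :
    ∀ C' : Set M, C'.Finite → C'.ncard ≤ k →
      ∀ opt : ℝ, (∀ x ∈ S, ∃ c' ∈ C', dist x c' ≤ opt) →
        ∀ x ∈ S, ∃ c ∈ C, dist x c ≤ 2 * (α / (α - 1)) * α * opt := by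
  intro C' hC'fin hC'k opt hopt x hx
  have hr : r ≤ 2 * opt :=
    Set.Pairwise.le_two_mul_of_ncard_lt (fun y hy y' hy' => hsep y hy y' hy') hC'fin
      (hC'k.trans_lt hYk) fun y hy => hopt y (hYS hy)
  obtain ⟨c, hc, hxc⟩ := hcost x hx
  have hα0 : 0 < α - 1 := sub_pos.mpr hα
  refine ⟨c, hc, hxc.trans ?_⟩
  calc α * r * (α / (α - 1)) ≤ α * (2 * opt) * (α / (α - 1)) := by gcongr
    _ = 2 * (α / (α - 1)) * α * opt := by ring

/-- Combining the covering upper bound with the pigeonhole lower bound gives a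
`2·(α/(α−1))·α` approximation ratio. -/
theorem stmt5 {M : Type*} [MetricSpace M] (S : Set M) (hS : S.Finite)
    (k : ℕ) (hk : 0 < k) (α r : ℝ) (hα : 1 < α) (hr : 0 < r)
    (Y : Set M) (hYS : Y ⊆ S) (hYk : k < Y.ncard)
    (hsep : ∀ y ∈ Y, ∀ y' ∈ Y, y ≠ y' → r ≤ dist y y')
    (C : Set M) (hCS : C ⊆ S) (hCfin : C.Finite) (hCk : C.ncard ≤ k)
    (hcost : ∀ x ∈ S, ∃ c ∈ C, dist x c ≤ α * r * (α / (α - 1))) :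
    ∀ C' : Set M, C'.Finite → C'.ncard ≤ k →
      ∀ opt : ℝ, (∀ x ∈ S, ∃ c' ∈ C', dist x c' ≤ opt) →
        ∀ x ∈ S, ∃ c ∈ C, dist x c ≤ 2 * (α / (α - 1)) * α * opt :=
  stmt5_general S k α r hα Y hYS hYk hsep C hcost
end

section
/- Let S be a finite point set in a metric space and suppose for each scale index i we have an r_i-net Y_i of S with r_i = α^i. Define i* as the smallest index with |Y_{i*}| ≤ k (assuming |Y_{i*−1}| > k and that such i* exists). Then the set C = Y_{i*} satisfies |C| ≤ k and its k-center cost is at most (α²/(α−1)) · 2 · OPT_k, where each Y_i is an α^i-net of Y_{i−1} and Y_{i0} = S for small enough i0. -/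
/-!
Two points of `Y (i* - 1)` that share a center of an optimal `k`-center solution of radius `R`
are at distance at most `2R`; since `Y (i* - 1)` has more than `k` points and is
`α^(i* - 1)`-separated, pigeonhole gives `α^(i* - 1) ≤ 2R`. On the other hand, chaining the
covering steps from `S = Y i0` up to `Y i*` moves a point by at most the geometric sum
`α^(i0+1) + ⋯ + α^(i*) ≤ α^(i*+1)/(α-1) = α²/(α-1) · α^(i*-1)`.
-/

open Set

section Pigeonhole

variable {M : Type*} [PseudoMetricSpace M]

theorem exists_ne_dist_le_two_mul_of_card_lt {T : Set M} {C : Finset M} {R : ℝ}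
    (hcard : C.card < T.ncard) (hcov : ∀ x ∈ T, ∃ c ∈ C, dist x c ≤ R) :
    ∃ a ∈ T, ∃ b ∈ T, a ≠ b ∧ dist a b ≤ 2 * R := by
  choose! f hfC hfR using hcov
  obtain ⟨a, ha, b, hb, hab, hfab⟩ := exists_ne_map_eq_of_ncard_lt_of_maps_to
    (t := (C : Set M)) (by rwa [ncard_coe_finset]) hfC
  refine ⟨a, ha, b, hb, hab, ?_⟩
  calc dist a b ≤ dist a (f a) + dist (f b) b := by rw [hfab]; exact dist_triangle _ _ _
    _ ≤ R + R := add_le_add (hfR a ha) (by rw [dist_comm]; exact hfR b hb)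
    _ = 2 * R := by ring

theorem le_two_mul_of_separated_of_card_lt {T : Set M} {C : Finset M} {r R : ℝ}
    (hsep : ∀ y ∈ T, ∀ y' ∈ T, y ≠ y' → r ≤ dist y y') (hcard : C.card < T.ncard)
    (hcov : ∀ x ∈ T, ∃ c ∈ C, dist x c ≤ R) : r ≤ 2 * R := by
  obtain ⟨a, ha, b, hb, hab, hdist⟩ := exists_ne_dist_le_two_mul_of_card_lt hcard hcov
  exact (hsep a ha b hb hab).trans hdist

end Pigeonhole

section NetHierarchy

variable {M : Type*} {Y : ℤ → Set M} {i0 : ℤ}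

theorem subset_base_of_nested (hnest : ∀ i, i0 < i → Y i ⊆ Y (i - 1)) {i : ℤ} (hi : i0 ≤ i) :
    Y i ⊆ Y i0 := by
  induction i, hi using Int.leInduction with
  | base => rfl
  | succ n hn ih => exact (hnest (n + 1) (by omega)).trans (by simpa using ih)

variable [PseudoMetricSpace M]

theorem exists_mem_dist_le_geom_of_cover {α : ℝ} (hα : 1 < α)
    (hcov : ∀ i, i0 < i → ∀ y ∈ Y (i - 1), ∃ z ∈ Y i, dist y z ≤ α ^ i)
    {i : ℤ} (hi : i0 ≤ i) {x : M} (hx : x ∈ Y i0) :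
    ∃ z ∈ Y i, dist x z ≤ (α ^ (i + 1) - α ^ (i0 + 1)) / (α - 1) := by
  have hα0 : α ≠ 0 := by positivity
  have hα1 : α - 1 ≠ 0 := by linarith
  induction i, hi using Int.leInduction with
  | base => exact ⟨x, hx, by simp⟩
  | succ n hn ih =>
    obtain ⟨z, hz, hxz⟩ := ih
    obtain ⟨z', hz', hzz'⟩ := hcov (n + 1) (by omega) z (by simpa using hz)
    refine ⟨z', hz', ?_⟩
    have hgeom : (α ^ (n + 1) - α ^ (i0 + 1)) / (α - 1) + α ^ (n + 1)
        = (α ^ (n + 1 + 1) - α ^ (i0 + 1)) / (α - 1) := by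
      rw [zpow_add_one₀ hα0 (n + 1)]
      field_simp
      ring
    linarith [dist_triangle x z z']

theorem exists_mem_dist_le_of_cover {α : ℝ} (hα : 1 < α)
    (hcov : ∀ i, i0 < i → ∀ y ∈ Y (i - 1), ∃ z ∈ Y i, dist y z ≤ α ^ i)
    {i : ℤ} (hi : i0 ≤ i) {x : M} (hx : x ∈ Y i0) :
    ∃ z ∈ Y i, dist x z ≤ α ^ 2 / (α - 1) * α ^ (i - 1) := by
  obtain ⟨z, hz, hxz⟩ := exists_mem_dist_le_geom_of_cover hα hcov hi hx
  refine ⟨z, hz, hxz.trans ?_⟩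
  have hα1 : 0 < α - 1 := by linarith
  have hpow : α ^ (i + 1) = α ^ 2 * α ^ (i - 1) := by
    rw [← zpow_natCast, ← zpow_add₀ (by positivity)]
    congr 1
    ring
  rw [div_mul_eq_mul_div, ← hpow]
  gcongr
  linarith [zpow_pos (by positivity : 0 < α) (i0 + 1)]

end NetHierarchy

theorem stmt18_general {M : Type*} [MetricSpace M] (S : Set M)
    (k : ℕ) (α : ℝ) (hα : 1 < α)
    (Y : ℤ → Set M) (i0 istar : ℤ) (hi0 : i0 < istar)
    (hbase : Y i0 = S)
    (hnest : ∀ i : ℤ, i0 < i → Y i ⊆ Y (i - 1))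
    (hsep : ∀ i : ℤ, i0 ≤ i → ∀ y ∈ Y i, ∀ y' ∈ Y i, y ≠ y' → α ^ i ≤ dist y y')
    (hcov : ∀ i : ℤ, i0 < i → ∀ y ∈ Y (i - 1), ∃ z ∈ Y i, dist y z ≤ α ^ i)
    (hk2 : k < (Y (istar - 1)).ncard) :
    ∀ C' : Finset M, C'.card ≤ k →
      ∀ R : ℝ, (∀ x ∈ S, ∃ c' ∈ C', dist x c' ≤ R) →
        ∀ x ∈ S, ∃ c ∈ Y istar, dist x c ≤ α ^ 2 / (α - 1) * 2 * R := by
  intro C' hC' R hcover x hx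
  subst hbase
  have hR : α ^ (istar - 1) ≤ 2 * R :=
    le_two_mul_of_separated_of_card_lt (hsep _ (by omega)) (hC'.trans_lt hk2)
      fun y hy => hcover y (subset_base_of_nested hnest (by omega) hy)
  obtain ⟨z, hz, hxz⟩ := exists_mem_dist_le_of_cover hα hcov hi0.le hx
  refine ⟨z, hz, hxz.trans ?_⟩
  have hα1 : 0 < α - 1 := by linarith
  rw [mul_assoc]
  gcongr

/-- The smallest scale `i*` at which the net has at most `k` points yields a
`2α²/(α−1)`-approximate `k`-center solution. -/
theorem stmt18 {M : Type*} [MetricSpace M] (S : Set M) (hS : S.Finite)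
    (k : ℕ) (hk : 0 < k) (α : ℝ) (hα : 1 < α)
    (Y : ℤ → Set M) (i0 istar : ℤ) (hi0 : i0 < istar)
    (hbase : Y i0 = S)
    (hnest : ∀ i : ℤ, i0 < i → Y i ⊆ Y (i - 1))
    (hsep : ∀ i : ℤ, i0 ≤ i → ∀ y ∈ Y i, ∀ y' ∈ Y i, y ≠ y' → α ^ i ≤ dist y y')
    (hcov : ∀ i : ℤ, i0 < i → ∀ y ∈ Y (i - 1), ∃ z ∈ Y i, dist y z ≤ α ^ i)
    (hk1 : (Y istar).ncard ≤ k) (hk2 : k < (Y (istar - 1)).ncard) :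
    ∀ C' : Finset M, C'.card ≤ k →
      ∀ R : ℝ, (∀ x ∈ S, ∃ c' ∈ C', dist x c' ≤ R) →
        ∀ x ∈ S, ∃ c ∈ Y istar, dist x c ≤ α ^ 2 / (α - 1) * 2 * R :=
  stmt18_general S k α hα Y i0 istar hi0 hbase hnest hsep hcov hk2
end
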